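/- Assume 0 ≤ p₁ ≤ 1, 0 ≤ p₂ ≤ 1, and |p₂ - p₁| < 1. Then the expected capture fraction converges at rate O(1/n): for every n ≥ 1, |(1/n) * ∑_{i=0}^{n-1} (p₁ * (η i 0) + p₂ * (η i 1)) - p₁ / (1 + p₁ - p₂)| ≤ 2 * p₁ * |p₂ - p₁| / (n * (1 + p₁ - p₂)^2). -/

import Mathlib

/-!
Mass is conserved, so the probability `xᵢ = η i 1` of being on the capture circle satisfies the
affine recursion `xᵢ₊₁ = p₁ + r xᵢ` with `r = p₂ - p₁`, whose solution from `x₀ = 0` is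
`xᵢ = π (1 - rⁱ)` for the stationary value `π = p₁ / (1 - r)`. The capture probability of game `i`
is `xᵢ₊₁`, so the average over `n` games differs from `π` by `π r / n` times a geometric sum, which
is at most `2 / (1 - r)` in absolute value because `|r| < 1`.
-/

open Matrix Filter

/-- Transition matrix of the two-state Markov chain:
row 0 = (1 - p₁, 1 - p₂), row 1 = (p₁, p₂). -/
def M (p₁ p₂ : ℝ) : Matrix (Fin 2) (Fin 2) ℝ := !![1 - p₁, 1 - p₂; p₁, p₂]

/-- Initial distribution: defender at the target center. -/
def e₁ : Fin 2 → ℝ := ![1, 0]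

/-- Distribution of the chain after `n` games when started in `S₁`. -/
def η (p₁ p₂ : ℝ) (n : ℕ) : Fin 2 → ℝ := (M p₁ p₂ ^ n) *ᵥ e₁

theorem eq_div_add_pow_mul_of_succ_eq {K : Type*} [Field K] {x : ℕ → K} {a r : K} (hr : r ≠ 1)
    (hx : ∀ i, x (i + 1) = a + r * x i) (i : ℕ) :
    x i = a / (1 - r) + r ^ i * (x 0 - a / (1 - r)) := by
  have hfix : a + r * (a / (1 - r)) = a / (1 - r) := by
    field_simp [sub_ne_zero.2 hr.symm]
    ring
  induction i with
  | zero => simp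
  | succ i ih =>
    rw [hx, ih, pow_succ]
    linear_combination hfix

theorem abs_geom_sum_le_of_abs_lt_one {r : ℝ} (hr : |r| < 1) (n : ℕ) :
    |∑ i ∈ Finset.range n, r ^ i| ≤ 2 / (1 - r) := by
  have hpos : 0 < 1 - r := by linarith [(abs_lt.1 hr).2]
  have hpow : |r ^ n| ≤ 1 := by
    rw [abs_pow]
    exact pow_le_one₀ (abs_nonneg r) hr.le
  rw [geom_sum_eq (by linarith [(abs_lt.1 hr).2] : r ≠ 1), ← neg_div_neg_eq, neg_sub, neg_sub,
    abs_div, abs_of_pos hpos]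
  gcongr
  calc |1 - r ^ n| ≤ |1| + |r ^ n| := abs_sub _ _
    _ ≤ 2 := by rw [abs_one]; linarith

theorem abs_average_add_geom_sub_le {r : ℝ} (hr : |r| < 1) (c b : ℝ) {n : ℕ} (hn : n ≠ 0) :
    |(1 / (n : ℝ)) * ∑ i ∈ Finset.range n, (c + b * r ^ i) - c| ≤ 2 * |b| / (n * (1 - r)) := by
  have hn' : (0 : ℝ) < n := by positivity
  have hpos : 0 < 1 - r := by linarith [(abs_lt.1 hr).2]
  have hmean : (1 / (n : ℝ)) * ∑ i ∈ Finset.range n, (c + b * r ^ i) - c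
      = b * (∑ i ∈ Finset.range n, r ^ i) / n := by
    rw [Finset.sum_add_distrib, Finset.sum_const, Finset.card_range, nsmul_eq_mul,
      ← Finset.mul_sum]
    field_simp
    ring
  rw [hmean, abs_div, abs_mul, Nat.abs_cast, div_le_div_iff₀ hn' (mul_pos hn' hpos)]
  calc |b| * |∑ i ∈ Finset.range n, r ^ i| * (n * (1 - r))
      ≤ |b| * (2 / (1 - r)) * (n * (1 - r)) := by
        gcongr
        exact abs_geom_sum_le_of_abs_lt_one hr n
    _ = 2 * |b| * n := by
        field_simp [hpos.ne']

section Chain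

variable (p₁ p₂ : ℝ)

theorem η_succ (i : ℕ) : η p₁ p₂ (i + 1) = M p₁ p₂ *ᵥ η p₁ p₂ i := by
  simp only [η, pow_succ', mulVec_mulVec]

theorem η_succ_zero (i : ℕ) :
    η p₁ p₂ (i + 1) 0 = (1 - p₁) * η p₁ p₂ i 0 + (1 - p₂) * η p₁ p₂ i 1 := by
  simp [η_succ, M, mulVec, dotProduct, Fin.sum_univ_two]

theorem η_succ_one (i : ℕ) :
    η p₁ p₂ (i + 1) 1 = p₁ * η p₁ p₂ i 0 + p₂ * η p₁ p₂ i 1 := by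
  simp [η_succ, M, mulVec, dotProduct, Fin.sum_univ_two]

theorem η_zero_add_η_one (i : ℕ) : η p₁ p₂ i 0 + η p₁ p₂ i 1 = 1 := by
  induction i with
  | zero => simp [η, e₁]
  | succ i ih =>
    rw [η_succ_zero, η_succ_one]
    linear_combination ih

theorem η_one_eq {p₁ p₂ : ℝ} (hr : p₂ - p₁ ≠ 1) (i : ℕ) :
    η p₁ p₂ i 1 = p₁ / (1 + p₁ - p₂) * (1 - (p₂ - p₁) ^ i) := by
  have hrec : ∀ j, η p₁ p₂ (j + 1) 1 = p₁ + (p₂ - p₁) * η p₁ p₂ j 1 := fun j => by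
    rw [η_succ_one]
    linear_combination p₁ * η_zero_add_η_one p₁ p₂ j
  have hstart : η p₁ p₂ 0 1 = 0 := by simp [η, e₁]
  rw [eq_div_add_pow_mul_of_succ_eq (x := fun j => η p₁ p₂ j 1) hr hrec i, hstart,
    show 1 - (p₂ - p₁) = 1 + p₁ - p₂ by ring]
  ring

end Chain

theorem capture_fraction_rate_general (p₁ p₂ : ℝ) (h₁ : 0 ≤ p₁)
    (h : |p₂ - p₁| < 1) (n : ℕ) (hn : 1 ≤ n) :
    |(1 / (n : ℝ)) * (∑ i ∈ Finset.range n, (p₁ * η p₁ p₂ i 0 + p₂ * η p₁ p₂ i 1)) -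
        p₁ / (1 + p₁ - p₂)| ≤
      2 * p₁ * |p₂ - p₁| / (n * (1 + p₁ - p₂) ^ 2) := by
  have hd : 0 < 1 + p₁ - p₂ := by linarith [(abs_lt.1 h).2]
  set π := p₁ / (1 + p₁ - p₂)
  have hgame : ∀ i, p₁ * η p₁ p₂ i 0 + p₂ * η p₁ p₂ i 1 = π + -(π * (p₂ - p₁)) * (p₂ - p₁) ^ i :=
    fun i => by
      rw [← η_succ_one, η_one_eq (by linarith [(abs_lt.1 h).2])]
      ring
  rw [Finset.sum_congr rfl fun i _ => hgame i]
  refine (abs_average_add_geom_sub_le h π _ (by omega)).trans_eq ?_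
  rw [show 1 - (p₂ - p₁) = 1 + p₁ - p₂ by ring, abs_neg, abs_mul, abs_div, abs_of_nonneg h₁,
    abs_of_pos hd]
  field_simp

theorem capture_fraction_rate (p₁ p₂ : ℝ) (h₁ : 0 ≤ p₁) (h₁' : p₁ ≤ 1)
    (h₂ : 0 ≤ p₂) (h₂' : p₂ ≤ 1) (h : |p₂ - p₁| < 1) (n : ℕ) (hn : 1 ≤ n) :
    |(1 / (n : ℝ)) * (∑ i ∈ Finset.range n, (p₁ * η p₁ p₂ i 0 + p₂ * η p₁ p₂ i 1)) -
        p₁ / (1 + p₁ - p₂)| ≤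
      2 * p₁ * |p₂ - p₁| / (n * (1 + p₁ - p₂) ^ 2) :=
  capture_fraction_rate_general p₁ p₂ h₁ h n hn
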